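/- If f : ℝ → ℝ is 5 times continuously differentiable, then β̃_0 := (13/12)(f(x-2Δx)-2f(x-Δx)+f(x))² + (f(x-2Δx)-3f(x-Δx)+2f(x))² and β̃_3 := (13/48)(3f(x)-7f(x+Δx)+5f(x+2Δx)-f(x+3Δx))² + (2f(x+Δx)-3f(x+2Δx)+f(x+3Δx))² have identical Taylor expansions through order Δx⁴: both equal f'(x)²Δx² + f'(x)f''(x)Δx³ + ((4/3)f''(x)² - (5/3)f'(x)f'''(x))Δx⁴ + O(Δx⁵). -/
import Mathlib

open Filter Asymptotics Topology Set

private lemma iterWithin_eq {g : ℝ → ℝ} (hg : ContDiff ℝ 5 g)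
    {k : ℕ} (hk : k ≤ 5) {s : Set ℝ} (hs : UniqueDiffOn ℝ s) {t : ℝ} (ht : t ∈ s) :
    iteratedDerivWithin k g s t = iteratedDeriv k g t := by
  rw [iteratedDerivWithin_eq_iteratedFDerivWithin, iteratedDeriv_eq_iteratedFDeriv]
  congr 1
  exact (((contDiff_iff_ftaylorSeries.mp hg).hasFTaylorSeriesUpToOn
    s).eq_iteratedFDerivWithin_of_uniqueDiffOn (by exact_mod_cast hk) hs ht).symm

private lemma taylor_rem {g : ℝ → ℝ} (hg : ContDiff ℝ 5 g) :
    (fun t : ℝ => g t - (g 0 + iteratedDeriv 1 g 0 * t + iteratedDeriv 2 g 0 * t ^ 2 / 2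
      + iteratedDeriv 3 g 0 * t ^ 3 / 6 + iteratedDeriv 4 g 0 * t ^ 4 / 24))
      =O[𝓝[>] (0 : ℝ)] fun t => t ^ 5 := by
  obtain ⟨C, hC⟩ := exists_taylor_mean_remainder_bound (f := g) (a := 0) (b := 1) (n := 4)
    zero_le_one (hg.contDiffOn (s := Icc 0 1))
  rw [isBigO_iff]
  refine ⟨C, ?_⟩
  filter_upwards [Ioo_mem_nhdsGT_of_mem (by norm_num : (0:ℝ) ∈ Ico (0:ℝ) 1)] with t ht
  have h0 : (0:ℝ) ∈ Icc (0:ℝ) 1 := by norm_num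
  have hu : UniqueDiffOn ℝ (Icc (0:ℝ) 1) := uniqueDiffOn_Icc one_pos
  have h1 := hC t ⟨ht.1.le, ht.2.le⟩
  have h2 : taylorWithinEval g 4 (Icc 0 1) 0 t
      = g 0 + iteratedDeriv 1 g 0 * t + iteratedDeriv 2 g 0 * t ^ 2 / 2
      + iteratedDeriv 3 g 0 * t ^ 3 / 6 + iteratedDeriv 4 g 0 * t ^ 4 / 24 := by
    rw [taylor_within_apply]
    simp only [Finset.sum_range_succ, Finset.sum_range_zero]
    rw [iterWithin_eq hg (by norm_num) hu h0, iterWithin_eq hg (by norm_num) hu h0,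
      iterWithin_eq hg (by norm_num) hu h0, iterWithin_eq hg (by norm_num) hu h0,
      iterWithin_eq hg (by norm_num) hu h0]
    simp [iteratedDeriv_zero, Nat.factorial, smul_eq_mul]
    ring
  rw [h2] at h1
  calc ‖g t - (g 0 + iteratedDeriv 1 g 0 * t + iteratedDeriv 2 g 0 * t ^ 2 / 2
      + iteratedDeriv 3 g 0 * t ^ 3 / 6 + iteratedDeriv 4 g 0 * t ^ 4 / 24)‖
      ≤ C * (t - 0) ^ (4 + 1) := h1
    _ = C * ‖t ^ 5‖ := by
        rw [Real.norm_eq_abs, abs_of_nonneg (pow_nonneg ht.1.le 5)]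
        ring

/-- Taylor polynomial of `f` at `x` in direction `c`, as a function of the step. -/
private noncomputable def TP (f : ℝ → ℝ) (x c Δx : ℝ) : ℝ :=
  f x + c * deriv f x * Δx
    + c ^ 2 * iteratedDeriv 2 f x * Δx ^ 2 / 2 + c ^ 3 * iteratedDeriv 3 f x * Δx ^ 3 / 6
    + c ^ 4 * iteratedDeriv 4 f x * Δx ^ 4 / 24

private lemma shift_rem (f : ℝ → ℝ) (hf : ContDiff ℝ 5 f) (x c : ℝ) :
    (fun Δx : ℝ => f (x + c * Δx) - TP f x c Δx) =O[𝓝[>] (0 : ℝ)] fun t => t ^ 5 := by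
  unfold TP
  have hg : ContDiff ℝ 5 (fun t : ℝ => f (x + c * t)) :=
    hf.comp (contDiff_const.add (contDiff_const.mul contDiff_id))
  have hd : ∀ k : ℕ, k ≤ 5 → iteratedDeriv k (fun t : ℝ => f (x + c * t)) 0
      = c ^ k * iteratedDeriv k f x := by
    intro k hk
    have h1 : ContDiff ℝ k (fun u : ℝ => f (x + u)) :=
      (hf.of_le (by exact_mod_cast hk)).comp (contDiff_const.add contDiff_id)
    have h2 := iteratedDeriv_comp_const_mul h1 c
    have h3 := congrFun h2 0
    rw [show (fun t : ℝ => f (x + c * t)) = (fun t : ℝ => (fun u : ℝ => f (x + u)) (c * t))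
      from rfl, h3, congrFun (iteratedDeriv_comp_const_add k f x) (c * 0)]
    norm_num
  have := taylor_rem hg
  rw [show x + c * 0 = x from by ring, hd 1 (by norm_num), hd 2 (by norm_num),
    hd 3 (by norm_num), hd 4 (by norm_num)] at this
  refine this.congr' (Eventually.of_forall fun t => ?_) EventuallyEq.rfl
  rw [iteratedDeriv_one]
  ring

private lemma combo {R Q1 Q2 w1 w2 : ℝ → ℝ} (c1 c2 : ℝ) (hR : Continuous R)
    (hQ1 : Continuous Q1) (hQ2 : Continuous Q2)
    (hw1 : w1 =O[𝓝[>] (0:ℝ)] fun t => t ^ 5) (hw2 : w2 =O[𝓝[>] (0:ℝ)] fun t => t ^ 5) :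
    (fun Δx : ℝ => Δx ^ 5 * R Δx + c1 * (2 * Q1 Δx * w1 Δx + w1 Δx * w1 Δx)
      + c2 * (2 * Q2 Δx * w2 Δx + w2 Δx * w2 Δx)) =O[𝓝[>] (0:ℝ)] fun t => t ^ 5 := by
  have h5 : (fun t : ℝ => t ^ 5) =O[𝓝[>] (0:ℝ)] fun _ => (1:ℝ) :=
    (((continuous_pow 5).tendsto 0).mono_left nhdsWithin_le_nhds).isBigO_one ℝ
  have h55 : (fun t : ℝ => t ^ 5 * t ^ 5) =O[𝓝[>] (0:ℝ)] fun t => t ^ 5 := by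
    simpa using (isBigO_refl (fun t : ℝ => t ^ 5) (𝓝[>] (0:ℝ))).mul h5
  have hRO : (fun Δx : ℝ => Δx ^ 5 * R Δx) =O[𝓝[>] (0:ℝ)] fun t => t ^ 5 := by
    simpa using (isBigO_refl (fun t : ℝ => t ^ 5) (𝓝[>] (0:ℝ))).mul
      (((hR.tendsto 0).mono_left nhdsWithin_le_nhds).isBigO_one ℝ)
  have hQw : ∀ (Q w : ℝ → ℝ), Continuous Q → w =O[𝓝[>] (0:ℝ)] (fun t => t ^ 5) →
      (fun Δx => 2 * Q Δx * w Δx + w Δx * w Δx) =O[𝓝[>] (0:ℝ)] fun t => t ^ 5 := by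
    intro Q w hQ hw
    refine IsBigO.add ?_ ((hw.mul hw).trans h55)
    have := ((((hQ.tendsto 0).mono_left nhdsWithin_le_nhds).isBigO_one ℝ).const_mul_left 2).mul hw
    simpa using this
  exact (hRO.add ((hQw Q1 w1 hQ1 hw1).const_mul_left c1)).add
    ((hQw Q2 w2 hQ2 hw2).const_mul_left c2)

/-- Degree ≥ 5 part of β̃₀, divided by Δx^5. -/
private noncomputable def Rone (f : ℝ → ℝ) (x Δx : ℝ) : ℝ :=
  (-3 * iteratedDeriv 2 f x * iteratedDeriv 3 f x + 13/12 * deriv f x * iteratedDeriv 4 f x)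
  + (16/9 * iteratedDeriv 3 f x ^ 2 + 65/36 * iteratedDeriv 2 f x * iteratedDeriv 4 f x) * Δx
  + (-13/6 * iteratedDeriv 3 f x * iteratedDeriv 4 f x) * Δx ^ 2
  + (143/216 * iteratedDeriv 4 f x ^ 2) * Δx ^ 3

/-- Degree ≥ 5 part of β̃₃, divided by Δx^5. -/
private noncomputable def Rtwo (f : ℝ → ℝ) (x Δx : ℝ) : ℝ :=
  (1/4 * iteratedDeriv 2 f x * iteratedDeriv 3 f x - 35/12 * deriv f x * iteratedDeriv 4 f x)
  + (139/144 * iteratedDeriv 3 f x ^ 2 - 131/72 * iteratedDeriv 2 f x * iteratedDeriv 4 f x) * Δx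
  + (9/4 * iteratedDeriv 3 f x * iteratedDeriv 4 f x) * Δx ^ 2
  + (3727/1728 * iteratedDeriv 4 f x ^ 2) * Δx ^ 3

theorem central_beta0_beta3_taylor (f : ℝ → ℝ) (hf : ContDiff ℝ 5 f) (x : ℝ) :
    ((fun Δx : ℝ =>
        ((13/12) * (f (x - 2 * Δx) - 2 * f (x - Δx) + f x) ^ 2
          + (f (x - 2 * Δx) - 3 * f (x - Δx) + 2 * f x) ^ 2)
        - ((deriv f x) ^ 2 * Δx ^ 2 + deriv f x * iteratedDeriv 2 f x * Δx ^ 3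
          + ((4/3) * (iteratedDeriv 2 f x) ^ 2
              - (5/3) * deriv f x * iteratedDeriv 3 f x) * Δx ^ 4))
      =O[𝓝[>] (0 : ℝ)] fun Δx => Δx ^ 5)
    ∧
    ((fun Δx : ℝ =>
        ((13/48) * (3 * f x - 7 * f (x + Δx) + 5 * f (x + 2 * Δx) - f (x + 3 * Δx)) ^ 2
          + (2 * f (x + Δx) - 3 * f (x + 2 * Δx) + f (x + 3 * Δx)) ^ 2)
        - ((deriv f x) ^ 2 * Δx ^ 2 + deriv f x * iteratedDeriv 2 f x * Δx ^ 3
          + ((4/3) * (iteratedDeriv 2 f x) ^ 2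
              - (5/3) * deriv f x * iteratedDeriv 3 f x) * Δx ^ 4))
      =O[𝓝[>] (0 : ℝ)] fun Δx => Δx ^ 5) := by
  have hTPc : ∀ c : ℝ, Continuous (fun Δx : ℝ => TP f x c Δx) := by
    intro c; unfold TP; fun_prop
  have hr : ∀ c : ℝ, (fun Δx : ℝ => f (x + c * Δx) - TP f x c Δx)
      =O[𝓝[>] (0 : ℝ)] fun t => t ^ 5 := shift_rem f hf x
  constructor
  · have key : (fun Δx : ℝ =>
        ((13/12) * (f (x - 2 * Δx) - 2 * f (x - Δx) + f x) ^ 2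
          + (f (x - 2 * Δx) - 3 * f (x - Δx) + 2 * f x) ^ 2)
        - ((deriv f x) ^ 2 * Δx ^ 2 + deriv f x * iteratedDeriv 2 f x * Δx ^ 3
          + ((4/3) * (iteratedDeriv 2 f x) ^ 2
              - (5/3) * deriv f x * iteratedDeriv 3 f x) * Δx ^ 4))
      = fun Δx : ℝ => Δx ^ 5 * Rone f x Δx
        + (13/12) * (2 * (TP f x (-2) Δx - 2 * TP f x (-1) Δx + f x)
            * ((f (x + (-2) * Δx) - TP f x (-2) Δx) - 2 * (f (x + (-1) * Δx) - TP f x (-1) Δx))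
          + ((f (x + (-2) * Δx) - TP f x (-2) Δx) - 2 * (f (x + (-1) * Δx) - TP f x (-1) Δx))
            * ((f (x + (-2) * Δx) - TP f x (-2) Δx) - 2 * (f (x + (-1) * Δx) - TP f x (-1) Δx)))
        + 1 * (2 * (TP f x (-2) Δx - 3 * TP f x (-1) Δx + 2 * f x)
            * ((f (x + (-2) * Δx) - TP f x (-2) Δx) - 3 * (f (x + (-1) * Δx) - TP f x (-1) Δx))
          + ((f (x + (-2) * Δx) - TP f x (-2) Δx) - 3 * (f (x + (-1) * Δx) - TP f x (-1) Δx))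
            * ((f (x + (-2) * Δx) - TP f x (-2) Δx) - 3 * (f (x + (-1) * Δx) - TP f x (-1) Δx))) := by
      funext Δx
      rw [show x - 2 * Δx = x + (-2) * Δx from by ring, show x - Δx = x + (-1) * Δx from by ring]
      unfold TP Rone
      ring
    rw [key]
    exact combo (13/12) 1 (by unfold Rone; fun_prop)
      (((hTPc (-2)).sub ((hTPc (-1)).const_smul (2:ℝ))).add continuous_const)
      (((hTPc (-2)).sub ((hTPc (-1)).const_smul (3:ℝ))).add continuous_const)
      ((hr (-2)).sub ((hr (-1)).const_mul_left 2))
      ((hr (-2)).sub ((hr (-1)).const_mul_left 3))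
  · have key : (fun Δx : ℝ =>
        ((13/48) * (3 * f x - 7 * f (x + Δx) + 5 * f (x + 2 * Δx) - f (x + 3 * Δx)) ^ 2
          + (2 * f (x + Δx) - 3 * f (x + 2 * Δx) + f (x + 3 * Δx)) ^ 2)
        - ((deriv f x) ^ 2 * Δx ^ 2 + deriv f x * iteratedDeriv 2 f x * Δx ^ 3
          + ((4/3) * (iteratedDeriv 2 f x) ^ 2
              - (5/3) * deriv f x * iteratedDeriv 3 f x) * Δx ^ 4))
      = fun Δx : ℝ => Δx ^ 5 * Rtwo f x Δx
        + (13/48) * (2 * (3 * f x - 7 * TP f x 1 Δx + 5 * TP f x 2 Δx - TP f x 3 Δx)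
            * ((5 * (f (x + 2 * Δx) - TP f x 2 Δx) - 7 * (f (x + 1 * Δx) - TP f x 1 Δx))
              - (f (x + 3 * Δx) - TP f x 3 Δx))
          + ((5 * (f (x + 2 * Δx) - TP f x 2 Δx) - 7 * (f (x + 1 * Δx) - TP f x 1 Δx))
              - (f (x + 3 * Δx) - TP f x 3 Δx))
            * ((5 * (f (x + 2 * Δx) - TP f x 2 Δx) - 7 * (f (x + 1 * Δx) - TP f x 1 Δx))
              - (f (x + 3 * Δx) - TP f x 3 Δx)))
        + 1 * (2 * (2 * TP f x 1 Δx - 3 * TP f x 2 Δx + TP f x 3 Δx)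
            * ((2 * (f (x + 1 * Δx) - TP f x 1 Δx) - 3 * (f (x + 2 * Δx) - TP f x 2 Δx))
              + (f (x + 3 * Δx) - TP f x 3 Δx))
          + ((2 * (f (x + 1 * Δx) - TP f x 1 Δx) - 3 * (f (x + 2 * Δx) - TP f x 2 Δx))
              + (f (x + 3 * Δx) - TP f x 3 Δx))
            * ((2 * (f (x + 1 * Δx) - TP f x 1 Δx) - 3 * (f (x + 2 * Δx) - TP f x 2 Δx))
              + (f (x + 3 * Δx) - TP f x 3 Δx))) := by
      funext Δx
      rw [show x + Δx = x + 1 * Δx from by ring]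
      unfold TP Rtwo
      ring
    rw [key]
    exact combo (13/48) 1 (by unfold Rtwo; fun_prop)
      ((((continuous_const.sub ((hTPc 1).const_smul (7:ℝ))).add
        ((hTPc 2).const_smul (5:ℝ))).sub (hTPc 3)))
      (((((hTPc 1).const_smul (2:ℝ)).sub ((hTPc 2).const_smul (3:ℝ))).add (hTPc 3)))
      ((((hr 2).const_mul_left 5).sub ((hr 1).const_mul_left 7)).sub (hr 3))
      ((((hr 1).const_mul_left 2).sub ((hr 2).const_mul_left 3)).add (hr 3))
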